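/- Let A ∈ ℝ^{m×n}, B ∈ ℝ^{n×ρ}, Θ₁,…,Θ_k a partition of {1,…,n}, and p^{(o)} the finest-partition optimal probabilities p^{(o)}_ℓ = a_ℓ/Σ_j a_j (a_ℓ = ‖A_{(·,ℓ)}‖₂‖B_{(ℓ,·)}‖₂ > 0). Define q_i = Σ_{ℓ ∈ Θ_i} p^{(o)}_ℓ. Then the estimator based on partition Θ with probabilities q satisfies E[‖AB − Ŝ‖_F²] ≤ (1/c)[(Σ_{ℓ=1}^n a_ℓ)² − ‖AB‖_F²]. -/

import Mathlib

/-!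
`Ŝ` is the mean of `c` independent copies of the one-draw estimator `M_r / q_r`, where
`M_i = A_{(·,Θ_i)} B_{(Θ_i,·)}` and `r` has law `q`; its mean is `AB`. Entrywise, the variance of
such a sample mean is `1/c` times the variance of one draw, so the expected squared error is exactly
`(1/c) (∑ᵢ ‖Mᵢ‖² / qᵢ - ‖AB‖²)`. The triangle inequality gives `‖Mᵢ‖ ≤ αᵢ := ∑_{ℓ ∈ Θᵢ} a_ℓ`, and
since `qᵢ = αᵢ / ∑ α`, the weighted sum `∑ᵢ αᵢ² / qᵢ` collapses to `(∑ α)² = (∑ a)²`.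
-/

open Finset

/-- Frobenius norm of a real matrix. -/
noncomputable def frob {m ρ : ℕ} (M : Matrix (Fin m) (Fin ρ) ℝ) : ℝ :=
  Real.sqrt (∑ i, ∑ j, (M i j) ^ 2)

/-- Euclidean (2-)norm of a real vector. -/
noncomputable def enorm2 {n : ℕ} (v : Fin n → ℝ) : ℝ :=
  Real.sqrt (∑ i, (v i) ^ 2)

/-- Spectral (operator 2-)norm of a real matrix. -/
noncomputable def spec {m ρ : ℕ} (M : Matrix (Fin m) (Fin ρ) ℝ) : ℝ :=
  ⨆ x : {x : Fin ρ → ℝ // enorm2 x ≤ 1}, enorm2 (M.mulVec x.1)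

/-- Block product `A_{(·,Θ_ℓ)} B_{(Θ_ℓ,·)} = ∑_{j : Θ j = ℓ} A_{(·,j)} B_{(j,·)}`. -/
noncomputable def blockProd {m n ρ k : ℕ} (A : Matrix (Fin m) (Fin n) ℝ)
    (B : Matrix (Fin n) (Fin ρ) ℝ) (Θ : Fin n → Fin k) (ℓ : Fin k) :
    Matrix (Fin m) (Fin ρ) ℝ :=
  Matrix.of fun i h => ∑ j ∈ Finset.univ.filter (fun j => Θ j = ℓ), A i j * B j h

/-- The randomized estimator `Ŝ` built from a sample `r : Fin c → Fin k`. -/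
noncomputable def Shat {m n ρ k : ℕ} (c : ℕ) (A : Matrix (Fin m) (Fin n) ℝ)
    (B : Matrix (Fin n) (Fin ρ) ℝ) (Θ : Fin n → Fin k) (p : Fin k → ℝ)
    (r : Fin c → Fin k) : Matrix (Fin m) (Fin ρ) ℝ :=
  ((c : ℝ)⁻¹) • ∑ i, (p (r i))⁻¹ • blockProd A B Θ (r i)

section IidSum

variable {ι κ : Type*} [Fintype ι] [DecidableEq ι] [Fintype κ] {w : κ → ℝ}

-- For a probability vector `w`, `∑ r, (∏ s, w (r s)) * F r` is the expectation of `F r` for a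
-- sample `r` whose coordinates are i.i.d. with law `w`.
theorem sum_pi_prod_weight_mul_prod (hw : ∑ j, w j = 1) (T : Finset ι) (f : ι → κ → ℝ) :
    ∑ r : ι → κ, (∏ s, w (r s)) * ∏ s ∈ T, f s (r s) = ∏ s ∈ T, ∑ j, w j * f s j := by
  have hsummand : ∀ r : ι → κ, (∏ s, w (r s)) * ∏ s ∈ T, f s (r s)
      = ∏ s, w (r s) * if s ∈ T then f s (r s) else 1 := fun r => by
    rw [prod_mul_distrib, Fintype.prod_ite_mem]
  have hfactor : ∀ s, ∑ j, w j * (if s ∈ T then f s j else 1)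
      = if s ∈ T then ∑ j, w j * f s j else 1 := fun s => by
    split_ifs <;> simp [hw]
  calc ∑ r : ι → κ, (∏ s, w (r s)) * ∏ s ∈ T, f s (r s)
      = ∑ r : ι → κ, ∏ s, w (r s) * if s ∈ T then f s (r s) else 1 :=
        sum_congr rfl fun r _ => hsummand r
    _ = ∏ s, ∑ j, w j * if s ∈ T then f s j else 1 :=
        (Fintype.prod_sum fun s j => w j * if s ∈ T then f s j else 1).symm
    _ = ∏ s ∈ T, ∑ j, w j * f s j := by simp_rw [hfactor, Fintype.prod_ite_mem]

theorem sum_pi_prod_weight_mul_apply (hw : ∑ j, w j = 1) (t : ι) (g : κ → ℝ) :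
    ∑ r : ι → κ, (∏ s, w (r s)) * g (r t) = ∑ j, w j * g j := by
  simpa using sum_pi_prod_weight_mul_prod hw {t} fun _ => g

theorem sum_pi_prod_weight_mul_apply_mul_apply (hw : ∑ j, w j = 1) {t u : ι} (htu : t ≠ u)
    (g h : κ → ℝ) :
    ∑ r : ι → κ, (∏ s, w (r s)) * (g (r t) * h (r u))
      = (∑ j, w j * g j) * ∑ j, w j * h j := by
  simpa [prod_pair htu, htu, htu.symm] using
    sum_pi_prod_weight_mul_prod hw {t, u} fun s => if s = t then g else h

theorem sum_pi_prod_weight_mul_mean_sub_sq [Nonempty ι] (hw : ∑ j, w j = 1) (g : κ → ℝ) :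
    ∑ r : ι → κ, (∏ s, w (r s)) *
        (∑ j, w j * g j - (Fintype.card ι : ℝ)⁻¹ * ∑ t, g (r t)) ^ 2
      = (Fintype.card ι : ℝ)⁻¹ * (∑ j, w j * g j ^ 2 - (∑ j, w j * g j) ^ 2) := by
  set μ := ∑ j, w j * g j
  set N : ℝ := (Fintype.card ι : ℝ) with hNdef
  have hN : N ≠ 0 := Nat.cast_ne_zero.mpr Fintype.card_ne_zero
  have hcentered : ∑ j, w j * (g j - μ) = 0 := by
    simp only [mul_sub, sum_sub_distrib, ← sum_mul, hw, one_mul]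
    exact sub_self μ
  have hvariance : ∑ j, w j * ((g j - μ) * (g j - μ)) = ∑ j, w j * g j ^ 2 - μ ^ 2 := by
    have hexpand : ∀ j, w j * ((g j - μ) * (g j - μ))
        = w j * g j ^ 2 - 2 * μ * (w j * g j) + μ ^ 2 * w j := fun j => by ring
    simp only [hexpand, sum_add_distrib, sum_sub_distrib, ← mul_sum, hw]
    ring
  have hsquare : ∀ r : ι → κ, (μ - N⁻¹ * ∑ t, g (r t)) ^ 2
      = N⁻¹ ^ 2 * ∑ t, ∑ u, (g (r t) - μ) * (g (r u) - μ) := fun r => by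
    rw [← sum_mul_sum, ← sq, sum_sub_distrib, sum_const, card_univ, nsmul_eq_mul]
    field_simp
    ring
  have hcross : ∀ t u : ι, ∑ r : ι → κ, (∏ s, w (r s)) * ((g (r t) - μ) * (g (r u) - μ))
      = if t = u then ∑ j, w j * g j ^ 2 - μ ^ 2 else 0 := fun t u => by
    split_ifs with htu
    · subst htu
      rw [← hvariance]
      exact sum_pi_prod_weight_mul_apply hw t fun j => (g j - μ) * (g j - μ)
    · rw [sum_pi_prod_weight_mul_apply_mul_apply hw htu (g · - μ) (g · - μ), hcentered, zero_mul]
  calc ∑ r : ι → κ, (∏ s, w (r s)) * (μ - N⁻¹ * ∑ t, g (r t)) ^ 2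
      = N⁻¹ ^ 2 * ∑ t, ∑ u, ∑ r : ι → κ,
          (∏ s, w (r s)) * ((g (r t) - μ) * (g (r u) - μ)) := by
        simp_rw [hsquare, mul_left_comm _ (N⁻¹ ^ 2), ← mul_sum, mul_sum]
        rw [sum_comm]
        exact sum_congr rfl fun t _ => sum_comm
    _ = N⁻¹ * (∑ j, w j * g j ^ 2 - μ ^ 2) := by
        simp_rw [hcross, sum_ite_eq, if_pos (mem_univ _), sum_const, card_univ, nsmul_eq_mul,
          ← hNdef]
        field_simp

end IidSum

section Frobenius

attribute [local instance] Matrix.frobeniusNormedAddCommGroup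

variable {m n ρ k : ℕ}

theorem frob_eq_norm (M : Matrix (Fin m) (Fin ρ) ℝ) : frob M = ‖M‖ := by
  simp [frob, Matrix.frobenius_norm_def, Real.sqrt_eq_rpow]

theorem frob_nonneg (M : Matrix (Fin m) (Fin ρ) ℝ) : 0 ≤ frob M :=
  Real.sqrt_nonneg _

theorem frob_sq (M : Matrix (Fin m) (Fin ρ) ℝ) : frob M ^ 2 = ∑ i, ∑ j, M i j ^ 2 :=
  Real.sq_sqrt (sum_nonneg fun _ _ => sum_nonneg fun _ _ => sq_nonneg _)

theorem frob_outer (A : Matrix (Fin m) (Fin n) ℝ) (B : Matrix (Fin n) (Fin ρ) ℝ) (ℓ : Fin n) :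
    frob (Matrix.of fun i h => A i ℓ * B ℓ h)
      = enorm2 (fun i => A i ℓ) * enorm2 (fun h => B ℓ h) := by
  rw [frob, enorm2, enorm2, ← Real.sqrt_mul (sum_nonneg fun _ _ => sq_nonneg _), sum_mul]
  simp_rw [mul_sum, Matrix.of_apply, mul_pow]

theorem blockProd_eq_sum_outer (A : Matrix (Fin m) (Fin n) ℝ) (B : Matrix (Fin n) (Fin ρ) ℝ)
    (Θ : Fin n → Fin k) (j : Fin k) :
    blockProd A B Θ j
      = ∑ ℓ ∈ univ.filter (fun ℓ => Θ ℓ = j), Matrix.of fun i h => A i ℓ * B ℓ h := by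
  ext i h
  simp [blockProd, Matrix.sum_apply]

theorem sum_blockProd (A : Matrix (Fin m) (Fin n) ℝ) (B : Matrix (Fin n) (Fin ρ) ℝ)
    (Θ : Fin n → Fin k) : ∑ j, blockProd A B Θ j = A * B := by
  ext i h
  simp only [Matrix.sum_apply, blockProd, Matrix.of_apply, Matrix.mul_apply]
  exact sum_fiberwise _ _ _

theorem frob_blockProd_le (A : Matrix (Fin m) (Fin n) ℝ) (B : Matrix (Fin n) (Fin ρ) ℝ)
    (Θ : Fin n → Fin k) (j : Fin k) :
    frob (blockProd A B Θ j) ≤ ∑ ℓ ∈ univ.filter (fun ℓ => Θ ℓ = j),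
      enorm2 (fun i => A i ℓ) * enorm2 (fun h => B ℓ h) := by
  simp_rw [blockProd_eq_sum_outer, ← frob_outer, frob_eq_norm]
  exact norm_sum_le _ _

end Frobenius

theorem Shat_apply {m n ρ k : ℕ} (c : ℕ) (A : Matrix (Fin m) (Fin n) ℝ)
    (B : Matrix (Fin n) (Fin ρ) ℝ) (Θ : Fin n → Fin k) (p : Fin k → ℝ) (r : Fin c → Fin k)
    (i : Fin m) (h : Fin ρ) :
    Shat c A B Θ p r i h = (c : ℝ)⁻¹ * ∑ t, (p (r t))⁻¹ * blockProd A B Θ (r t) i h := by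
  simp [Shat, Matrix.sum_apply]

theorem sum_pi_prod_mul_frob_sub_Shat_sq {m n ρ k c : ℕ} (hc : 0 < c)
    (A : Matrix (Fin m) (Fin n) ℝ) (B : Matrix (Fin n) (Fin ρ) ℝ) (Θ : Fin n → Fin k)
    {q : Fin k → ℝ} (hq : ∀ j, q j ≠ 0) (hsum : ∑ j, q j = 1) :
    ∑ r : Fin c → Fin k, (∏ s, q (r s)) * frob (A * B - Shat c A B Θ q r) ^ 2
      = (c : ℝ)⁻¹ * (∑ j, (q j)⁻¹ * frob (blockProd A B Θ j) ^ 2 - frob (A * B) ^ 2) := by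
  have : Nonempty (Fin c) := ⟨⟨0, hc⟩⟩
  have hentry (i : Fin m) (h : Fin ρ) :
      ∑ r : Fin c → Fin k, (∏ s, q (r s)) * (A * B - Shat c A B Θ q r) i h ^ 2
        = (c : ℝ)⁻¹ * (∑ j, (q j)⁻¹ * blockProd A B Θ j i h ^ 2 - (A * B) i h ^ 2) := by
    have hmean : ∑ j, q j * ((q j)⁻¹ * blockProd A B Θ j i h) = (A * B) i h := by
      simp_rw [mul_inv_cancel_left₀ (hq _), ← sum_blockProd A B Θ, Matrix.sum_apply]
    have hvar := sum_pi_prod_weight_mul_mean_sub_sq (ι := Fin c) hsum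
      fun j => (q j)⁻¹ * blockProd A B Θ j i h
    simp only [Fintype.card_fin, hmean] at hvar
    simp_rw [Matrix.sub_apply, Shat_apply, hvar]
    congr 2
    refine sum_congr rfl fun j _ => ?_
    field_simp [hq j]
  calc ∑ r : Fin c → Fin k, (∏ s, q (r s)) * frob (A * B - Shat c A B Θ q r) ^ 2
      = ∑ i, ∑ h, ∑ r : Fin c → Fin k,
          (∏ s, q (r s)) * (A * B - Shat c A B Θ q r) i h ^ 2 := by
        simp_rw [frob_sq, mul_sum]
        rw [sum_comm]
        exact sum_congr rfl fun i _ => sum_comm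
    _ = (c : ℝ)⁻¹ * (∑ j, (q j)⁻¹ * frob (blockProd A B Θ j) ^ 2 - frob (A * B) ^ 2) := by
        simp_rw [hentry, ← mul_sum, sum_sub_distrib, frob_sq, mul_sum]
        congr 2
        exact (sum_congr rfl fun i _ => sum_comm).trans sum_comm

theorem sum_inv_div_sum_mul_sq_le {κ : Type*} [Fintype κ] {α β : κ → ℝ} (hα : ∀ j, 0 < α j)
    (hβ : ∀ j, 0 ≤ β j) (hβα : ∀ j, β j ≤ α j) :
    ∑ j, (α j / ∑ i, α i)⁻¹ * β j ^ 2 ≤ (∑ j, α j) ^ 2 := by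
  have hS : 0 ≤ ∑ i, α i := sum_nonneg fun j _ => (hα j).le
  calc ∑ j, (α j / ∑ i, α i)⁻¹ * β j ^ 2
      ≤ ∑ j, (α j / ∑ i, α i)⁻¹ * α j ^ 2 := by
        gcongr with j
        · exact inv_nonneg.mpr (div_nonneg (hα j).le hS)
        · exact hβ j
        · exact hβα j
    _ = (∑ j, α j) ^ 2 := by
        simp_rw [inv_div, div_mul_eq_mul_div, sq (α _), ← mul_assoc, mul_div_assoc,
          div_self (hα _).ne', mul_one, ← mul_sum, sq]

theorem stmt11 (m n ρ k c : ℕ) (hk : 1 ≤ k) (hc : 1 ≤ c)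
    (A : Matrix (Fin m) (Fin n) ℝ) (B : Matrix (Fin n) (Fin ρ) ℝ)
    (Θ : Fin n → Fin k) (hΘ : Function.Surjective Θ)
    (a : Fin n → ℝ)
    (ha : ∀ ℓ, a ℓ = enorm2 (fun i => A i ℓ) * enorm2 (fun h => B ℓ h))
    (hapos : ∀ ℓ, 0 < a ℓ)
    (po : Fin n → ℝ) (hpo : ∀ ℓ, po ℓ = a ℓ / ∑ j, a j)
    (q : Fin k → ℝ)
    (hq : ∀ i, q i = ∑ ℓ ∈ Finset.univ.filter (fun ℓ => Θ ℓ = i), po ℓ) :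
    ∑ r : Fin c → Fin k, (∏ i, q (r i)) * frob (A * B - Shat c A B Θ q r) ^ 2 ≤
      (c : ℝ)⁻¹ * ((∑ ℓ, a ℓ) ^ 2 - frob (A * B) ^ 2) := by
  set α : Fin k → ℝ := fun j => ∑ ℓ ∈ univ.filter (fun ℓ => Θ ℓ = j), a ℓ
  have hα : ∀ j, 0 < α j := fun j =>
    let ⟨ℓ, hℓ⟩ := hΘ j
    sum_pos (fun ℓ _ => hapos ℓ) ⟨ℓ, by simp [hℓ]⟩
  have hαsum : ∑ j, α j = ∑ ℓ, a ℓ := sum_fiberwise _ _ _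
  obtain rfl : q = fun j => α j / ∑ i, α i := by
    funext j
    simp only [hq, hpo, hαsum, ← sum_div, α]
  have hS : 0 < ∑ i, α i := sum_pos (fun j _ => hα j) ⟨⟨0, hk⟩, mem_univ _⟩
  rw [sum_pi_prod_mul_frob_sub_Shat_sq hc A B Θ (fun j => (div_pos (hα j) hS).ne')
    (by rw [← sum_div, div_self hS.ne']), ← hαsum]
  gcongr
  refine sum_inv_div_sum_mul_sq_le hα (fun j => frob_nonneg _) fun j => ?_
  simpa only [α, ha] using frob_blockProd_le A B Θ j
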